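/- The Riccati update preserves positive semidefiniteness: if Q - M^T R^{-1} M is positive semidefinite, R is symmetric positive definite, and K' is symmetric positive semidefinite, then K = A^T K' A + Q - (A^T K' B + M^T)(R + B^T K' B)^{-1}(M + B^T K' A) is symmetric positive semidefinite. -/

import Mathlib

/-!
The Riccati update is the Schur complement of the lower-right block in
`[[Q, Mᴴ], [M, R]] + [A B]ᴴ K' [A B]`. The first summand is positive semidefinite by the Schur
condition on the stage cost, the second as a congruence of `K'`, and a Schur complement of a
positive semidefinite block matrix with positive definite pivot is positive semidefinite.
-/

open Matrix ComplexOrder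

namespace Matrix

variable {𝕜 : Type*} [RCLike 𝕜] {m n p : Type*} [Fintype m] [Fintype n] [Fintype p]

theorem PosSemidef.fromBlocks_conjTranspose_mul_mul {K : Matrix p p 𝕜} (hK : K.PosSemidef)
    (A : Matrix p m 𝕜) (B : Matrix p n 𝕜) :
    (fromBlocks (Aᴴ * K * A) (Aᴴ * K * B) (Bᴴ * K * A) (Bᴴ * K * B)).PosSemidef := by
  have h := hK.conjTranspose_mul_mul_same (fromCols A B)
  rwa [conjTranspose_fromCols_eq_fromRows_conjTranspose, fromRows_mul,
    fromRows_mul_fromCols] at h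

variable [DecidableEq n]

theorem PosSemidef.riccati_update {K : Matrix p p 𝕜} (hK : K.PosSemidef)
    (A : Matrix p m 𝕜) (B : Matrix p n 𝕜) (Q : Matrix m m 𝕜) {R : Matrix n n 𝕜}
    (hR : R.PosDef) (M : Matrix n m 𝕜) (hSchur : (Q - Mᴴ * R⁻¹ * M).PosSemidef) :
    (Aᴴ * K * A + Q -
        (Aᴴ * K * B + Mᴴ) * (R + Bᴴ * K * B)⁻¹ * (M + Bᴴ * K * A)).PosSemidef := by
  have hS : (R + Bᴴ * K * B).PosDef := hR.add_posSemidef (hK.conjTranspose_mul_mul_same B)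
  have := hR.isUnit.invertible
  have := hS.isUnit.invertible
  have hStage : (fromBlocks Q Mᴴ M R).PosSemidef := by
    have h := (PosDef.fromBlocks₂₂ Q Mᴴ hR).2
    rw [conjTranspose_conjTranspose] at h
    exact h hSchur
  have hSum := (hK.fromBlocks_conjTranspose_mul_mul A B).add hStage
  rw [fromBlocks_add, add_comm (Bᴴ * K * A), add_comm (Bᴴ * K * B)] at hSum
  have hOff : (Aᴴ * K * B + Mᴴ)ᴴ = M + Bᴴ * K * A := by
    rw [conjTranspose_add, conjTranspose_conjTranspose, add_comm]
    simp only [conjTranspose_mul, conjTranspose_conjTranspose, hK.1.eq, Matrix.mul_assoc]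
  rw [← hOff] at hSum ⊢
  exact (PosDef.fromBlocks₂₂ _ _ hS).1 hSum

end Matrix

theorem stmt_7_general (d d' m : ℕ)
    (A : Matrix (Fin d') (Fin d) ℝ)
    (B : Matrix (Fin d') (Fin m) ℝ)
    (Q : Matrix (Fin d) (Fin d) ℝ)
    (R : Matrix (Fin m) (Fin m) ℝ) (hR : R.PosDef)
    (M : Matrix (Fin m) (Fin d) ℝ)
    (K' : Matrix (Fin d') (Fin d') ℝ) (hK' : K'.PosSemidef)
    (hSchur : (Q - Mᵀ * R⁻¹ * M).PosSemidef) :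
    (Aᵀ * K' * A + Q -
        (Aᵀ * K' * B + Mᵀ) * (R + Bᵀ * K' * B)⁻¹ * (M + Bᵀ * K' * A)).PosSemidef := by
  simp only [← conjTranspose_eq_transpose_of_trivial] at hSchur ⊢
  exact hK'.riccati_update A B Q hR M hSchur

theorem stmt_7 (d d' m : ℕ)
    (A : Matrix (Fin d') (Fin d) ℝ)
    (B : Matrix (Fin d') (Fin m) ℝ)
    (Q : Matrix (Fin d) (Fin d) ℝ) (hQ : Q.IsSymm)
    (R : Matrix (Fin m) (Fin m) ℝ) (hR : R.PosDef)
    (M : Matrix (Fin m) (Fin d) ℝ)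
    (K' : Matrix (Fin d') (Fin d') ℝ) (hK' : K'.PosSemidef)
    (hSchur : (Q - Mᵀ * R⁻¹ * M).PosSemidef) :
    (Aᵀ * K' * A + Q -
        (Aᵀ * K' * B + Mᵀ) * (R + Bᵀ * K' * B)⁻¹ * (M + Bᵀ * K' * A)).PosSemidef :=
  stmt_7_general d d' m A B Q R hR M K' hK' hSchur
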